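/- arXiv:2210.03085 — 2 statements merged into one kernel-verified Lean document; each statement's English description precedes it below -/
import Mathlib

section
/- Let s, t, k be natural numbers with t < k. Then for every real number α_k, every integer l with 1 ≤ l ≤ k − t, and all X ≥ 1, one has ∮ |F(α_k, α^{t−1})|^{2s} dα^{t−1} ≪ X^{i_{l+1} + i_{l+2} + ⋯ + i_{k−t}} · I(α_k; l), with an implicit constant depending only on s and k. -/
/-- `e(z) = e^{2πiz}`. -/
noncomputable def e (z : ℝ) : ℂ := Complex.exp (2 * Real.pi * Complex.I * z)

/-- The unit cube `[0,1)^n`. -/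
def unitCube (n : ℕ) : Set (Fin n → ℝ) := Set.univ.pi fun _ => Set.Ico (0 : ℝ) 1

/-- The exponential sum `F(α_{k_1}, α^{t−1}) = Σ_{1≤x≤X} e(α_{k_1}x^{k_1} + ⋯ + α_{k_t}x^{k_t})`;
here `αk` is the leading coefficient `α_{k_1}` and, for `j : Fin (t-1)`, `α j` is the
coefficient `α_{k_{j+2}}` of `x^{k_{j+2}}`. -/
noncomputable def Fsum (kk : ℕ → ℕ) (t : ℕ) (X : ℝ) (αk : ℝ) (α : Fin (t - 1) → ℝ) : ℂ :=
  ∑ x ∈ Finset.Icc 1 ⌊X⌋₊,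
    e (αk * (x : ℝ) ^ kk 1 + ∑ j : Fin (t - 1), α j * (x : ℝ) ^ kk (j.1 + 2))

/-- The exponential sum `f(α_k, α) = Σ_{1≤x≤X} e(α_k x^k + α_{k−1}x^{k−1} + ⋯ + α_1 x)`;
for `j : Fin (k-1)`, `α j` is the coefficient `α_{j+1}` of `x^{j+1}`. -/
noncomputable def fsum (k : ℕ) (X : ℝ) (αk : ℝ) (α : Fin (k - 1) → ℝ) : ℂ :=
  ∑ x ∈ Finset.Icc 1 ⌊X⌋₊,
    e (αk * (x : ℝ) ^ k + ∑ j : Fin (k - 1), α j * (x : ℝ) ^ (j.1 + 1))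

/-- The `1`-based coordinate `v_m` of a vector `v = (v_1, …, v_n)` (zero outside `1 ≤ m ≤ n`). -/
def coord1 {n : ℕ} (v : Fin n → ℝ) (m : ℕ) : ℝ :=
  if h : 1 ≤ m ∧ m ≤ n then v ⟨m - 1, by omega⟩ else 0

/-- The quantity `I(α_k; l) = Σ_{|g_{i_1}|≤sX^{i_1}} ⋯ Σ_{|g_{i_l}|≤sX^{i_l}}
∮ |f(α_k, α)|^{2s} e(−(α_{i_1}g_{i_1} + ⋯ + α_{i_l}g_{i_l})) dα`; by orthogonality each
summand is a nonnegative real number, so we record its real part. -/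
noncomputable def Isum (s k : ℕ) (ii : ℕ → ℕ) (X : ℝ) (αk : ℝ) (l : ℕ) : ℝ :=
  ∑ g ∈ Fintype.piFinset (fun j : Fin l =>
      Finset.Icc (-(⌊(s : ℝ) * X ^ ii (j.1 + 1)⌋)) ⌊(s : ℝ) * X ^ ii (j.1 + 1)⌋),
    ∫ α in unitCube (k - 1),
      ‖fsum k X αk α‖ ^ (2 * s) *
        (e (-(∑ j : Fin l, coord1 α (ii (j.1 + 1)) * (g j : ℝ)))).re


/-!
Expanding `|F|^{2s}` and integrating, orthogonality of `α ↦ e(αm)` on `[0,1)` turns each integral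
into a count of solutions `x, y ∈ [1, X]^s` of `σ_i(x) = σ_i(y) + d_i` for `i ∈ E`, where
`σ_i(x) = x_1^i + ⋯ + x_s^i`, each solution weighted by `Re e(α_k (σ_k(x) - σ_k(y)))`
(`weightedCount E d`). The left side is the count for `E = {k_2, …, k_t}` and `d = 0`. Splitting it
according to the values `d_i = σ_i(x) - σ_i(y)` for `i ∈ G = {i_{l+1}, …, i_{k-t}}`, which range
over a box with `≪ X^{i_{l+1} + ⋯ + i_{k-t}}` points, writes it as a sum of counts for `E ∪ G` with
shifts `d`. A shifted count is the integral of `|f|^{2s}` against a character, so it is at most the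
unshifted one. Summing over `g` in `I(α_k; l)` frees the equations `i ∈ {i_1, …, i_l}` in the same
way, and since `{1, …, k-1} = E ⊔ G ⊔ {i_1, …, i_l}`, `I(α_k; l)` is exactly the unshifted count
for `E ∪ G`.
-/

open MeasureTheory Finset Function

lemma e_add (a b : ℝ) : e (a + b) = e a * e b := by
  simp only [e, Complex.ofReal_add, mul_add, Complex.exp_add]

lemma e_zero : e 0 = 1 := by simp [e]

lemma e_sum {κ : Type*} (S : Finset κ) (f : κ → ℝ) : e (∑ i ∈ S, f i) = ∏ i ∈ S, e (f i) := by
  simp only [e, Complex.ofReal_sum, Finset.mul_sum, Complex.exp_sum]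

lemma conj_e (a : ℝ) : starRingEnd ℂ (e a) = e (-a) := by
  simp only [e, ← Complex.exp_conj, map_mul, Complex.conj_I, Complex.conj_ofReal, map_ofNat,
    Complex.ofReal_neg]
  ring_nf

lemma norm_e (a : ℝ) : ‖e a‖ = 1 := by
  rw [e, Complex.norm_exp]
  simp

@[fun_prop]
lemma continuous_e : Continuous e := by
  unfold e
  fun_prop

lemma integral_Ico_e_mul_int (m : ℤ) :
    ∫ t in Set.Ico (0 : ℝ) 1, e (t * m) = if m = 0 then 1 else 0 := by
  split_ifs with hm
  · simp [hm, e_zero]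
  have hc : 2 * (Real.pi : ℂ) * Complex.I * m ≠ 0 := by
    simp [Real.pi_ne_zero, Complex.I_ne_zero, hm]
  have he : ∀ t : ℝ, e (t * m) = Complex.exp (2 * Real.pi * Complex.I * m * t) := fun t => by
    rw [e]; push_cast; ring_nf
  simp_rw [he]
  rw [integral_Ico_eq_integral_Ioo, ← integral_Ioc_eq_integral_Ioo,
    ← intervalIntegral.integral_of_le zero_le_one, integral_exp_mul_complex hc]
  have h1 : Complex.exp (2 * Real.pi * Complex.I * m) = 1 := by
    convert Complex.exp_int_mul_two_pi_mul_I m using 2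
    ring
  simp [h1]

variable {ι : Type*} [Fintype ι]

lemma integral_cube_e_sum_mul_int (m : ι → ℤ) :
    ∫ α in Set.univ.pi (fun _ : ι => Set.Ico (0 : ℝ) 1), e (∑ j, α j * m j) =
      ∏ j, if m j = 0 then 1 else 0 := by
  simp_rw [e_sum]
  rw [volume_pi, Measure.restrict_pi_pi, integral_fintype_prod_eq_prod
    (f := fun j (t : ℝ) => e (t * m j))]
  exact prod_congr rfl fun j _ => integral_Ico_e_mul_int (m j)

lemma volume_cube_lt_top : volume (Set.univ.pi fun _ : ι => Set.Ico (0 : ℝ) 1) < ⊤ := by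
  simp [volume_pi_pi]

def powerSum {s : ℕ} (x : Fin s → ℕ) (i : ℕ) : ℤ := ∑ m, (x m : ℤ) ^ i

def tuples (s M : ℕ) : Finset (Fin s → ℕ) := Fintype.piFinset fun _ => Icc 1 M

noncomputable def expSum (M N : ℕ) (αk : ℝ) (ε : ι → ℕ) (α : ι → ℝ) : ℂ :=
  ∑ x ∈ Icc 1 M, e (αk * (x : ℝ) ^ N + ∑ j, α j * (x : ℝ) ^ ε j)

section
variable (s M N : ℕ) (αk : ℝ)

noncomputable def weightedCount (E : Finset ℕ) (d : ℕ → ℤ) : ℝ :=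
  ∑ x ∈ tuples s M, ∑ y ∈ tuples s M, (e (αk * (powerSum x N - powerSum y N))).re *
    ∏ i ∈ E, if powerSum x i = powerSum y i + d i then 1 else 0

lemma expSum_pow (ε : ι → ℕ) (α : ι → ℝ) :
    expSum M N αk ε α ^ s =
      ∑ x ∈ tuples s M, e (αk * powerSum x N + ∑ j, α j * powerSum x (ε j)) := by
  rw [expSum, ← Fin.prod_const, prod_univ_sum]
  refine sum_congr rfl fun x _ => ?_
  rw [← e_sum]
  congr 1
  simp only [powerSum, Int.cast_sum, Int.cast_pow, Int.cast_natCast, sum_add_distrib, mul_sum]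
  rw [sum_comm]

lemma norm_expSum_pow_mul_e (ε : ι → ℕ) (d : ι → ℤ) (α : ι → ℝ) :
    ((‖expSum M N αk ε α‖ ^ (2 * s) : ℝ) : ℂ) * e (-∑ j, α j * d j) =
      ∑ x ∈ tuples s M, ∑ y ∈ tuples s M, e (αk * (powerSum x N - powerSum y N)) *
        e (∑ j, α j * (powerSum x (ε j) - powerSum y (ε j) - d j : ℤ)) := by
  rw [pow_mul, Complex.ofReal_pow, Complex.sq_norm, ← Complex.mul_conj, mul_pow, ← map_pow,
    expSum_pow, map_sum, sum_mul_sum, sum_mul]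
  refine sum_congr rfl fun x _ => ?_
  rw [sum_mul]
  refine sum_congr rfl fun y _ => ?_
  rw [conj_e, ← e_add, ← e_add, ← e_add]
  congr 1
  push_cast
  simp only [mul_sub, sum_sub_distrib]
  ring

theorem integral_norm_expSum_pow_mul_e {ε : ι → ℕ} (hε : Injective ε) (d : ℕ → ℤ) :
    ∫ α in Set.univ.pi (fun _ : ι => Set.Ico (0 : ℝ) 1),
        ‖expSum M N αk ε α‖ ^ (2 * s) * (e (-∑ j, α j * d (ε j))).re =
      weightedCount s M N αk (univ.image ε) d := by
  have hint : ∀ x y : Fin s → ℕ, IntegrableOn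
      (fun α : ι → ℝ => e (αk * (powerSum x N - powerSum y N)) *
        e (∑ j, α j * (powerSum x (ε j) - powerSum y (ε j) - d (ε j) : ℤ)))
      (Set.univ.pi fun _ : ι => Set.Ico (0 : ℝ) 1) := fun x y =>
    IntegrableOn.of_bound volume_cube_lt_top
      (Continuous.aestronglyMeasurable (by fun_prop)) 1 (ae_of_all _ fun α => by simp [norm_e])
  have hpt : ∀ α : ι → ℝ, ‖expSum M N αk ε α‖ ^ (2 * s) * (e (-∑ j, α j * d (ε j))).re =
      RCLike.re (∑ x ∈ tuples s M, ∑ y ∈ tuples s M, e (αk * (powerSum x N - powerSum y N)) *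
        e (∑ j, α j * (powerSum x (ε j) - powerSum y (ε j) - d (ε j) : ℤ))) := fun α => by
    rw [← norm_expSum_pow_mul_e, RCLike.re_to_complex, Complex.re_ofReal_mul]
  simp_rw [hpt]
  rw [integral_re (integrable_finsetSum _ fun x _ => integrable_finsetSum _ fun y _ => hint x y),
    integral_finsetSum _ fun x _ => integrable_finsetSum _ fun y _ => hint x y, weightedCount,
    RCLike.re_to_complex, Complex.re_sum]
  refine sum_congr rfl fun x _ => ?_
  rw [integral_finsetSum _ fun y _ => hint x y, Complex.re_sum]
  refine sum_congr rfl fun y _ => ?_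
  rw [integral_const_mul, integral_cube_e_sum_mul_int, prod_image hε.injOn]
  have hδ : (∏ j, if powerSum x (ε j) - powerSum y (ε j) - d (ε j) = 0 then (1 : ℂ) else 0) =
      ((∏ j, if powerSum x (ε j) = powerSum y (ε j) + d (ε j) then 1 else 0 : ℝ) : ℂ) := by
    simp only [sub_sub, sub_eq_zero, Complex.ofReal_prod, apply_ite Complex.ofReal,
      Complex.ofReal_one, Complex.ofReal_zero]
  rw [hδ, Complex.re_mul_ofReal]
lemma norm_expSum_le (ε : ι → ℕ) (α : ι → ℝ) : ‖expSum M N αk ε α‖ ≤ M :=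
  (norm_sum_le _ _).trans (by simp [norm_e])

lemma integrableOn_norm_expSum_pow (ε : ι → ℕ) :
    IntegrableOn (fun α => ‖expSum M N αk ε α‖ ^ (2 * s))
      (Set.univ.pi fun _ : ι => Set.Ico (0 : ℝ) 1) :=
  IntegrableOn.of_bound volume_cube_lt_top
    (Continuous.aestronglyMeasurable (by unfold expSum; fun_prop)) ((M : ℝ) ^ (2 * s))
    (ae_of_all _ fun α => by
      simpa using pow_le_pow_left₀ (norm_nonneg _) (norm_expSum_le M N αk ε α) (2 * s))

theorem integral_norm_expSum_pow {ε : ι → ℕ} (hε : Injective ε) :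
    ∫ α in Set.univ.pi (fun _ : ι => Set.Ico (0 : ℝ) 1), ‖expSum M N αk ε α‖ ^ (2 * s) =
      weightedCount s M N αk (univ.image ε) 0 := by
  simpa [e_zero] using integral_norm_expSum_pow_mul_e s M N αk hε 0

theorem abs_weightedCount_le (E : Finset ℕ) (d : ℕ → ℤ) :
    |weightedCount s M N αk E d| ≤ weightedCount s M N αk E 0 := by
  have hE : univ.image ((↑) : E → ℕ) = E := by simp
  rw [← hE, ← integral_norm_expSum_pow_mul_e s M N αk (ε := ((↑) : E → ℕ)) Subtype.val_injective,
    ← integral_norm_expSum_pow s M N αk Subtype.val_injective, ← Real.norm_eq_abs]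
  refine norm_integral_le_of_norm_le (integrableOn_norm_expSum_pow s M N αk ((↑) : E → ℕ))
    (ae_of_all _ fun α => ?_)
  rw [norm_mul, norm_pow, norm_norm, Real.norm_eq_abs]
  exact mul_le_of_le_one_right (by positivity)
    ((Complex.abs_re_le_norm _).trans (norm_e _).le)

lemma weightedCount_zero_nonneg (E : Finset ℕ) : 0 ≤ weightedCount s M N αk E 0 :=
  (abs_nonneg _).trans (abs_weightedCount_le s M N αk E 0)

end

def scatter {n : ℕ} (p : Fin n → ℕ) (g : Fin n → ℤ) (i : ℕ) : ℤ :=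
  ∑ m, if p m = i then g m else 0

section
variable {n : ℕ} {p : Fin n → ℕ}

lemma scatter_apply (hp : Injective p) (g : Fin n → ℤ) (m : Fin n) : scatter p g (p m) = g m := by
  simp [scatter, hp.eq_iff]

lemma scatter_eq_zero {i : ℕ} (hi : i ∉ univ.image p) (g : Fin n → ℤ) : scatter p g i = 0 :=
  sum_eq_zero fun m _ => if_neg fun h => hi (mem_image.mpr ⟨m, mem_univ m, h⟩)

lemma sum_piFinset_prod_ite_eq (a b : Fin n → ℤ) {B : Fin n → Finset ℤ}
    (hB : ∀ m, a m - b m ∈ B m) :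
    ∑ g ∈ Fintype.piFinset B, ∏ m, (if a m = b m + g m then (1 : ℝ) else 0) = 1 := by
  rw [← prod_univ_sum (f := fun m v => if a m = b m + v then (1 : ℝ) else 0)]
  refine prod_eq_one fun m _ => ?_
  simp_rw [eq_comm (a := a m), ← eq_sub_iff_add_eq']
  simp [hB m]

theorem sum_weightedCount_scatter (s M N : ℕ) (αk : ℝ) {A : Finset ℕ} (hp : Injective p)
    (hA : Disjoint A (univ.image p)) {B : Fin n → Finset ℤ}
    (hB : ∀ m, ∀ x ∈ tuples s M, ∀ y ∈ tuples s M, powerSum x (p m) - powerSum y (p m) ∈ B m) :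
    ∑ g ∈ Fintype.piFinset B, weightedCount s M N αk (A ∪ univ.image p) (scatter p g) =
      weightedCount s M N αk A 0 := by
  unfold weightedCount
  rw [sum_comm]
  refine sum_congr rfl fun x hx => ?_
  rw [sum_comm]
  refine sum_congr rfl fun y hy => ?_
  simp_rw [← mul_sum, prod_union hA, prod_image hp.injOn, scatter_apply hp]
  have hA0 : ∀ g : Fin n → ℤ, ∀ i ∈ A, scatter p g i = 0 := fun g i hi =>
    scatter_eq_zero (disjoint_left.mp hA hi) g
  rw [sum_congr rfl fun g _ => by rw [prod_congr rfl fun i hi => by rw [hA0 g i hi]], ← mul_sum,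
    sum_piFinset_prod_ite_eq _ _ fun m => hB m x hx y hy, mul_one]
  rfl
end

lemma sum_fin_add_eq_sum_Icc {R : Type*} [AddCommMonoid R] (f : ℕ → R) {a b n : ℕ}
    (h : n + a = b + 1) : ∑ m : Fin n, f (m + a) = ∑ j ∈ Icc a b, f j := by
  rw [Fin.sum_univ_eq_sum_range (fun m => f (m + a)), ← Ico_add_one_right_eq_Icc,
    sum_Ico_eq_sum_range, show b + 1 - a = n by omega]
  simp only [add_comm]

noncomputable def coeffBox (s : ℕ) (X : ℝ) (i : ℕ) : Finset ℤ :=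
  Icc (-⌊(s : ℝ) * X ^ i⌋) ⌊(s : ℝ) * X ^ i⌋

section
variable {s : ℕ}

lemma powerSum_nonneg (x : Fin s → ℕ) (i : ℕ) : 0 ≤ powerSum x i :=
  sum_nonneg fun _ _ => by positivity

lemma powerSum_le {M : ℕ} {x : Fin s → ℕ} (hx : x ∈ tuples s M) (i : ℕ) :
    powerSum x i ≤ s * M ^ i := by
  have hxM : ∀ m, x m ≤ M := fun m => (mem_Icc.mp (Fintype.mem_piFinset.mp hx m)).2
  calc powerSum x i ≤ ∑ _m : Fin s, (M : ℤ) ^ i :=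
        sum_le_sum fun m _ => pow_le_pow_left₀ (by positivity) (by exact_mod_cast hxM m) i
    _ = s * M ^ i := by simp

lemma powerSum_sub_mem_coeffBox {X : ℝ} (hX : 0 ≤ X) {x y : Fin s → ℕ} (hx : x ∈ tuples s ⌊X⌋₊)
    (hy : y ∈ tuples s ⌊X⌋₊) (i : ℕ) : powerSum x i - powerSum y i ∈ coeffBox s X i := by
  have hfloor : (s : ℤ) * ⌊X⌋₊ ^ i ≤ ⌊(s : ℝ) * X ^ i⌋ := by
    rw [Int.le_floor]
    push_cast
    gcongr
    exact Nat.floor_le hX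
  have := powerSum_le hx i
  have := powerSum_le hy i
  have := powerSum_nonneg x i
  have := powerSum_nonneg y i
  rw [coeffBox, mem_Icc]
  constructor <;> linarith

lemma card_coeffBox_le {X : ℝ} (hX : 1 ≤ X) (i : ℕ) :
    (#(coeffBox s X i) : ℝ) ≤ (2 * s + 1) * X ^ i := by
  have h0 : 0 ≤ ⌊(s : ℝ) * X ^ i⌋ := Int.floor_nonneg.mpr (by positivity)
  have hcard : (#(coeffBox s X i) : ℤ) = 2 * ⌊(s : ℝ) * X ^ i⌋ + 1 := by
    rw [coeffBox, Int.card_Icc]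
    omega
  rw [show (#(coeffBox s X i) : ℝ) = 2 * ⌊(s : ℝ) * X ^ i⌋ + 1 by exact_mod_cast hcard]
  have := Int.floor_le ((s : ℝ) * X ^ i)
  have := one_le_pow₀ (n := i) hX
  linarith

lemma card_piFinset_coeffBox_le {X : ℝ} (hX : 1 ≤ X) (q : ℕ → ℕ) {a b n : ℕ}
    (h : n + a = b + 1) :
    (#(Fintype.piFinset fun m : Fin n => coeffBox s X (q (m + a))) : ℝ) ≤
      (2 * s + 1) ^ n * X ^ ∑ j ∈ Icc a b, q j := by
  rw [Fintype.card_piFinset, Nat.cast_prod, ← sum_fin_add_eq_sum_Icc q h, ← prod_pow_eq_pow_sum,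
    ← Fin.prod_const, ← prod_mul_distrib]
  exact prod_le_prod (fun _ _ => by positivity) fun m _ => card_coeffBox_le hX _
end

lemma mem_image_univ_fin_add (q : ℕ → ℕ) (c n i : ℕ) :
    i ∈ univ.image (fun j : Fin n => q (j + c)) ↔ ∃ a, c ≤ a ∧ a < n + c ∧ q a = i := by
  constructor
  · rintro h
    obtain ⟨j, -, rfl⟩ := mem_image.mp h
    exact ⟨j + c, by omega, by omega, rfl⟩
  · rintro ⟨a, hca, han, rfl⟩
    exact mem_image.mpr ⟨⟨a - c, by omega⟩, mem_univ _, by simp [Nat.sub_add_cancel hca]⟩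

lemma injective_fin_add_of_anti {q : ℕ → ℕ} {lo hi : ℕ}
    (hq : ∀ a b, lo ≤ a → a < b → b ≤ hi → q b < q a) {c n : ℕ} (hc : lo ≤ c)
    (hn : n + c ≤ hi + 1) : Injective fun j : Fin n => q (j + c) := by
  intro i j hij
  by_contra hne
  rcases lt_or_gt_of_ne (Fin.val_ne_of_ne hne) with h | h
  · exact (hq (i + c) (j + c) (by omega) (by omega) (by omega)).ne hij.symm
  · exact (hq (j + c) (i + c) (by omega) (by omega) (by omega)).ne hij

lemma coord1_eq_sum {n : ℕ} (v : Fin n → ℝ) (i : ℕ) :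
    coord1 v i = ∑ j : Fin n, if j.1 + 1 = i then v j else 0 := by
  unfold coord1
  split_ifs with h
  · rw [sum_eq_single ⟨i - 1, by omega⟩ (fun j _ hj => if_neg fun hji => hj (Fin.ext (by
      simp only; omega))) (by simp)]
    rw [if_pos (by simp only; omega)]
  · exact (sum_eq_zero fun j _ => if_neg fun hji => h ⟨by omega, by omega⟩).symm

lemma sum_coord1_mul_eq_sum_mul_scatter {n l : ℕ} (v : Fin n → ℝ) (p : Fin l → ℕ)
    (g : Fin l → ℤ) : ∑ m, coord1 v (p m) * g m = ∑ j : Fin n, v j * scatter p g (j + 1) := by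
  simp only [coord1_eq_sum, scatter, sum_mul, mul_sum, Int.cast_sum, ite_mul, mul_ite, zero_mul,
    mul_zero, apply_ite (Int.cast : ℤ → ℝ), Int.cast_zero]
  rw [sum_comm]
  refine sum_congr rfl fun m _ => sum_congr rfl fun j _ => ?_
  simp only [eq_comm]

lemma integral_norm_Fsum_pow (s t : ℕ) (kk : ℕ → ℕ) (X αk : ℝ)
    (hkk : Injective fun j : Fin (t - 1) => kk (j + 2)) :
    ∫ α in unitCube (t - 1), ‖Fsum kk t X αk α‖ ^ (2 * s) =
      weightedCount s ⌊X⌋₊ (kk 1) αk (univ.image fun j : Fin (t - 1) => kk (j + 2)) 0 :=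
  integral_norm_expSum_pow s ⌊X⌋₊ (kk 1) αk hkk

lemma Isum_eq_sum_weightedCount (s k : ℕ) (ii : ℕ → ℕ) (X αk : ℝ) (l : ℕ) :
    Isum s k ii X αk l =
      ∑ g ∈ Fintype.piFinset (fun m : Fin l => coeffBox s X (ii (m + 1))),
        weightedCount s ⌊X⌋₊ k αk (univ.image fun j : Fin (k - 1) => j + 1)
          (scatter (fun m : Fin l => ii (m + 1)) g) := by
  refine sum_congr rfl fun g _ => ?_
  simp_rw [sum_coord1_mul_eq_sum_mul_scatter]
  exact integral_norm_expSum_pow_mul_e s ⌊X⌋₊ k αk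
    ((add_left_injective 1).comp Fin.val_injective) _

lemma exponent_partition {k t l : ℕ} {kk ii : ℕ → ℕ} (hk1 : kk 1 = k) (ht : 1 ≤ t)
    (hkt : 1 ≤ kk t) (hkmono : ∀ a b : ℕ, 1 ≤ a → a < b → b ≤ t → kk b < kk a)
    (himono : ∀ a b : ℕ, 1 ≤ a → a < b → b ≤ k - t → ii b < ii a)
    (hirange : (Icc 1 (k - t)).image ii = Icc 1 k \ (Icc 1 t).image kk) (hl : l ≤ k - t) :
    let E := univ.image fun j : Fin (t - 1) => kk (j + 2)
    let L := univ.image fun m : Fin l => ii (m + 1)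
    let G := univ.image fun m : Fin (k - t - l) => ii (m + (l + 1))
    Disjoint E G ∧ Disjoint (E ∪ G) L ∧
      univ.image (fun j : Fin (k - 1) => (j : ℕ) + 1) = E ∪ G ∪ L := by
  intro E L G
  have hmem : ∀ i, i ∈ image ii (Icc 1 (k - t)) ↔
      (1 ≤ i ∧ i ≤ k) ∧ ∀ b, 1 ≤ b → b ≤ t → kk b ≠ i := by
    simp [hirange, and_assoc]
  have hE : ∀ a, 2 ≤ a → a ≤ t → 1 ≤ kk a ∧ kk a < k := fun a h2 hat => by
    refine ⟨?_, hk1 ▸ hkmono 1 a le_rfl (by omega) hat⟩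
    rcases hat.lt_or_eq with h | rfl
    exacts [hkt.trans (hkmono a t (by omega) h le_rfl).le, hkt]
  have hI : ∀ a, 1 ≤ a → a ≤ k - t → ii a < k ∧ ∀ b, 1 ≤ b → b ≤ t → kk b ≠ ii a :=
    fun a h1 h2 => by
      obtain ⟨⟨-, hk⟩, hne⟩ := (hmem (ii a)).mp (mem_image_of_mem ii (mem_Icc.mpr ⟨h1, h2⟩))
      exact ⟨lt_of_le_of_ne hk (hk1 ▸ (hne 1 le_rfl ht).symm), hne⟩
  have hfull : ∀ i, i ∈ univ.image (fun j : Fin (k - 1) => (j : ℕ) + 1) ↔ 1 ≤ i ∧ i ≤ k - 1 := by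
    refine fun i => ⟨fun h => ?_, fun h => mem_image.mpr ⟨⟨i - 1, by omega⟩, mem_univ _, by
      simp only; omega⟩⟩
    obtain ⟨j, -, rfl⟩ := mem_image.mp h
    omega
  simp only [E, L, G, disjoint_left, Finset.ext_iff, mem_union, hfull, mem_image_univ_fin_add]
  refine ⟨?_, ?_, fun i => ⟨fun ⟨h1, h2⟩ => ?_, ?_⟩⟩
  · rintro i ⟨a, ha2, hat, rfl⟩ ⟨b, hb1, hbk, hb⟩
    exact (hI b (by omega) (by omega)).2 a (by omega) (by omega) hb.symm
  · rintro i (⟨a, ha2, hat, rfl⟩ | ⟨a, ha1, hak, rfl⟩) ⟨b, hb1, hbl, hb⟩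
    · exact (hI b (by omega) (by omega)).2 a (by omega) (by omega) hb.symm
    · exact (himono b a (by omega) (by omega) (by omega)).ne' hb
  · by_cases hk : ∃ b, 1 ≤ b ∧ b ≤ t ∧ kk b = i
    · obtain ⟨b, hb1, hbt, rfl⟩ := hk
      have : b ≠ 1 := by rintro rfl; omega
      exact Or.inl (Or.inl ⟨b, by omega, by omega, rfl⟩)
    · obtain ⟨a, ha, rfl⟩ := mem_image.mp ((hmem i).mpr
        ⟨⟨h1, by omega⟩, fun b hb1 hbt h => hk ⟨b, hb1, hbt, h⟩⟩)
      rcases le_or_gt a l with h | h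
      · exact Or.inr ⟨a, (mem_Icc.mp ha).1, by omega, rfl⟩
      · exact Or.inl (Or.inr ⟨a, h, by have := (mem_Icc.mp ha).2; omega, rfl⟩)
  · rintro ((⟨a, ha2, hat, rfl⟩ | ⟨a, ha1, hak, rfl⟩) | ⟨a, ha1, hal, rfl⟩)
    · have := hE a ha2 (by omega); omega
    · have := hI a (by omega) (by omega)
      have := (hmem (ii a)).mp (mem_image_of_mem ii (mem_Icc.mpr ⟨by omega, by omega⟩))
      omega
    · have := hI a (by omega) (by omega)
      have := (hmem (ii a)).mp (mem_image_of_mem ii (mem_Icc.mpr ⟨by omega, by omega⟩))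
      omega

theorem statement6 (s k : ℕ) :
    ∃ C : ℝ, 0 < C ∧
    ∀ (t : ℕ) (kk ii : ℕ → ℕ)
      (hk1 : kk 1 = k) (ht : 1 ≤ t) (htk : t < k) (hkt : 1 ≤ kk t)
      (hkmono : ∀ a b : ℕ, 1 ≤ a → a < b → b ≤ t → kk b < kk a)
      (himono : ∀ a b : ℕ, 1 ≤ a → a < b → b ≤ k - t → ii b < ii a)
      (hirange : (Finset.Icc 1 (k - t)).image ii =
        Finset.Icc 1 k \ (Finset.Icc 1 t).image kk)
      (αk : ℝ) (l : ℕ) (hl1 : 1 ≤ l) (hl2 : l ≤ k - t) (X : ℝ) (hX : 1 ≤ X),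
      (∫ α in unitCube (t - 1), ‖Fsum kk t X αk α‖ ^ (2 * s)) ≤
        C * X ^ (∑ j ∈ Finset.Icc (l + 1) (k - t), ii j) * Isum s k ii X αk l := by
  refine ⟨(2 * s + 1) ^ k, by positivity, ?_⟩
  intro t kk ii hk1 ht _ hkt hkmono himono hirange αk l _ hl2 X hX
  obtain ⟨hEG, hEGL, hfull⟩ := exponent_partition hk1 ht hkt hkmono himono hirange hl2
  set pE : Fin (t - 1) → ℕ := fun j => kk (j + 2)
  set pG : Fin (k - t - l) → ℕ := fun m => ii (m + (l + 1))
  set count := weightedCount s ⌊X⌋₊ k αk (univ.image pE ∪ univ.image pG)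
  have hbox : ∀ i, ∀ x ∈ tuples s ⌊X⌋₊, ∀ y ∈ tuples s ⌊X⌋₊,
      powerSum x i - powerSum y i ∈ coeffBox s X i := fun i _ hx _ hy =>
    powerSum_sub_mem_coeffBox (by linarith) hx hy i
  have hI : Isum s k ii X αk l = count 0 := by
    rw [Isum_eq_sum_weightedCount, hfull, sum_weightedCount_scatter _ _ _ _
      (injective_fin_add_of_anti himono le_rfl (by omega)) hEGL fun _ => hbox _]
  have hcard : (#(Fintype.piFinset fun m => coeffBox s X (pG m)) : ℝ) ≤
      (2 * s + 1) ^ k * X ^ (∑ j ∈ Icc (l + 1) (k - t), ii j) :=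
    (card_piFinset_coeffBox_le hX ii (b := k - t) (by omega)).trans
      (by gcongr; exacts [by linarith, by omega])
  calc (∫ α in unitCube (t - 1), ‖Fsum kk t X αk α‖ ^ (2 * s))
      = weightedCount s ⌊X⌋₊ k αk (univ.image pE) 0 :=
        hk1 ▸ integral_norm_Fsum_pow s t kk X αk
          (injective_fin_add_of_anti hkmono (by omega) (by omega))
    _ = ∑ h ∈ Fintype.piFinset fun m => coeffBox s X (pG m), count (scatter pG h) :=
        (sum_weightedCount_scatter _ _ _ _ (injective_fin_add_of_anti himono (by omega) (by omega))
          hEG fun _ => hbox _).symm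
    _ ≤ ∑ h ∈ Fintype.piFinset fun m => coeffBox s X (pG m), count 0 :=
        sum_le_sum fun h _ => (le_abs_self _).trans (abs_weightedCount_le _ _ _ _ _ _)
    _ ≤ _ := by
      rw [sum_const, nsmul_eq_mul, ← hI]
      exact mul_le_mul_of_nonneg_right hcard (hI ▸ weightedCount_zero_nonneg ..)
end

section
/- Let ν ∈ (0,1). For all sufficiently large X (in terms of t and ν), for every H with 1 ≤ H ≤ X^{1−ν}, and for every (α_1, …, α_t) ∈ 𝔪̃_H, one has N(H) ≤ 1; that is, for every γ = (γ_1, …, γ_t) ∈ [0,1)^t there is at most one integer h with 1 ≤ h ≤ H satisfying ‖hα_j − γ_j‖ < (4k)^{−1} X^{−k_j} for every j = 1, …, t. -/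
/-!
If two admissible `h₂ < h₁` existed, then `h = h₁ - h₂ ≤ H` would satisfy
`‖h α_j‖ < (2k)⁻¹ X^{-k_j}` for every `j`. Writing `b_j` for the integer nearest to `h α_j` and
reducing `(h, b_1, …, b_t)` to lowest terms `(q, a_1, …, a_t)` gives
`|α_j - a_j / q| = ‖h α_j‖ / h ≤ (2k)⁻¹ X^{-k_j} / q ≤ t⁻¹ q⁻¹ X^{1-k_j} H⁻¹`,
the last step because `t ≤ k` and `H ≤ X`. So `α` would lie on a major arc.
-/

/-- `‖θ‖`, the distance from `θ` to the nearest integer. -/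
noncomputable def nint (θ : ℝ) : ℝ := |θ - round θ|

/-- The major arcs `𝔐̃_H ⊆ [0,1)^t`: the union over `0 ≤ a_1, …, a_t ≤ q ≤ X` with
`gcd(q, a_1, …, a_t) = 1` of the boxes
`{α : |α_i − a_i/q| ≤ t⁻¹ q⁻¹ X^{−k_i+1} H⁻¹ for all i}`.  The `i`-th coordinate
(`i : Fin t`, zero-based) corresponds to the exponent `k_{i+1} = kk (i+1)`. -/
def majorT (t : ℕ) (kk : ℕ → ℕ) (H X : ℝ) : Set (Fin t → ℝ) :=
  {α | (∀ i, α i ∈ Set.Ico (0 : ℝ) 1) ∧ ∃ q : ℕ, ∃ a : Fin t → ℕ,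
      (∀ i, a i ≤ q) ∧ (q : ℝ) ≤ X ∧ Nat.gcd q (Finset.univ.gcd a) = 1 ∧
      ∀ i : Fin t, |α i - (a i : ℝ) / (q : ℝ)| ≤
        (t : ℝ)⁻¹ * (q : ℝ)⁻¹ * X ^ (1 - (kk (i.1 + 1) : ℝ)) * H⁻¹}

open Finset

lemma nint_sub_le (x y : ℝ) : nint (x - y) ≤ nint x + nint y :=
  calc nint (x - y) ≤ |x - y - ((round x - round y : ℤ) : ℝ)| := round_le _ _
    _ = |(x - round x) - (y - round y)| := by push_cast; ring_nf
    _ ≤ nint x + nint y := abs_sub _ _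

lemma exists_nat_le_abs_sub_div_eq_nint {α : ℝ} (hα : α ∈ Set.Ico 0 1) {h : ℕ} (hh : 0 < h) :
    ∃ b : ℕ, b ≤ h ∧ |α - b / h| = nint (h * α) / h := by
  have hhR : (0 : ℝ) < h := by exact_mod_cast hh
  have hround := abs_le.mp (abs_sub_round ((h : ℝ) * α))
  have hlo : (-1 : ℝ) < round ((h : ℝ) * α) := by nlinarith [hα.1]
  have hhi : (round ((h : ℝ) * α) : ℝ) < h + 1 := by nlinarith [hα.2]
  have hlo' : (-1 : ℤ) < round ((h : ℝ) * α) := by exact_mod_cast hlo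
  have hhi' : round ((h : ℝ) * α) < h + 1 := by exact_mod_cast hhi
  refine ⟨(round ((h : ℝ) * α)).toNat, by omega, ?_⟩
  have hcast : (((round ((h : ℝ) * α)).toNat : ℤ) : ℝ) = round ((h : ℝ) * α) := by
    rw [Int.toNat_of_nonneg (by omega)]
  rw [← Int.cast_natCast, hcast, nint, ← abs_of_pos hhR, ← abs_div, abs_of_pos hhR]
  congr 1
  field_simp

lemma exists_coprime_mul_eq {ι : Type*} [Fintype ι] {h : ℕ} (hh : 0 < h) (b : ι → ℕ) :
    ∃ q : ℕ, ∃ a : ι → ℕ, 0 < q ∧ q ≤ h ∧ Nat.gcd q (univ.gcd a) = 1 ∧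
      ∀ i, a i * h = b i * q := by
  set G := univ.gcd b
  set d := Nat.gcd h G
  have hd : 0 < d := Nat.gcd_pos_of_pos_left _ hh
  have hdh : d ∣ h := Nat.gcd_dvd_left h G
  have hdG : d ∣ G := Nat.gcd_dvd_right h G
  have hdb : ∀ i, d ∣ b i := fun i => hdG.trans (gcd_dvd (mem_univ i))
  refine ⟨h / d, fun i => b i / d, Nat.div_pos (Nat.le_of_dvd hh hdh) hd, Nat.div_le_self h d,
    ?_, fun i => ?_⟩
  · have hdvd : univ.gcd (fun i => b i / d) ∣ G / d :=
      (Nat.dvd_div_iff_mul_dvd hdG).2 <| Finset.dvd_gcd fun i _ =>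
        Nat.mul_dvd_of_dvd_div (hdb i) (gcd_dvd (mem_univ i))
    exact (Nat.coprime_div_gcd_div_gcd hd).coprime_dvd_right hdvd
  · rw [Nat.div_mul_right_comm (hdb i), Nat.mul_div_assoc _ hdh]

lemma mem_majorT_of_nint_mul_le {t : ℕ} {kk : ℕ → ℕ} {H X : ℝ} {α : Fin t → ℝ}
    (hα : ∀ i, α i ∈ Set.Ico 0 1) {h : ℕ} (hh : 0 < h) (hhX : (h : ℝ) ≤ X)
    (hnint : ∀ i, nint (h * α i) ≤ (t : ℝ)⁻¹ * X ^ (1 - (kk (i.1 + 1) : ℝ)) * H⁻¹) :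
    α ∈ majorT t kk H X := by
  choose b hbh hb using fun i => exists_nat_le_abs_sub_div_eq_nint (hα i) hh
  obtain ⟨q, a, hq, hqh, hcop, hab⟩ := exists_coprime_mul_eq hh b
  have hqR : (0 : ℝ) < q := by exact_mod_cast hq
  have hqhR : (q : ℝ) ≤ h := by exact_mod_cast hqh
  have hfrac : ∀ i, (a i : ℝ) / q = b i / h := fun i => by
    rw [div_eq_div_iff hqR.ne' (by positivity)]
    exact_mod_cast hab i
  refine ⟨hα, q, a, fun i => ?_, hqhR.trans hhX, hcop, fun i => ?_⟩
  · refine Nat.le_of_mul_le_mul_right ?_ hh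
    rw [hab i, mul_comm q]
    exact Nat.mul_le_mul_right q (hbh i)
  · calc |α i - a i / q| = nint (h * α i) / h := by rw [hfrac, hb]
      _ ≤ nint (h * α i) / q := div_le_div_of_nonneg_left (abs_nonneg _) hqR hqhR
      _ ≤ (t : ℝ)⁻¹ * X ^ (1 - (kk (i.1 + 1) : ℝ)) * H⁻¹ / q :=
        div_le_div_of_nonneg_right (hnint i) hqR.le
      _ = _ := by ring

lemma two_mul_inv_four_mul_rpow_le {t k H X : ℝ} (ht : 0 < t) (htk : t ≤ k) (hH : 0 < H)
    (hHX : H ≤ X) (e : ℝ) :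
    2 * ((4 * k)⁻¹ * X ^ (-e)) ≤ t⁻¹ * X ^ (1 - e) * H⁻¹ := by
  have hX : 0 < X := hH.trans_le hHX
  rw [sub_eq_add_neg, Real.rpow_add hX, Real.rpow_one]
  have hY : 0 < X ^ (-e) := Real.rpow_pos_of_pos hX _
  have hk : 0 < k := ht.trans_le htk
  calc 2 * ((4 * k)⁻¹ * X ^ (-e)) = X * X ^ (-e) / (2 * k * X) := by field_simp; ring
    _ ≤ X * X ^ (-e) / (t * H) := by
      gcongr
      nlinarith [mul_le_mul htk hHX hH.le hk.le]
    _ = t⁻¹ * (X * X ^ (-e)) * H⁻¹ := by ring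

theorem statement16_general (ν : ℝ) (hν : ν ∈ Set.Ioo (0 : ℝ) 1) (t : ℕ) :
    ∃ X₀ : ℝ, ∀ (k : ℕ) (kk : ℕ → ℕ), kk 1 = k → 2 ≤ k → t < k → 1 ≤ kk t →
      (∀ a b : ℕ, 1 ≤ a → a < b → b ≤ t → kk b < kk a) →
      ∀ X : ℝ, X₀ ≤ X →
      ∀ H : ℝ, 1 ≤ H → H ≤ X ^ (1 - ν) →
      ∀ α : Fin t → ℝ,
        α ∈ (Set.univ.pi fun _ : Fin t => Set.Ico (0 : ℝ) 1) \ majorT t kk H X →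
      ∀ γ : Fin t → ℝ, (∀ i, γ i ∈ Set.Ico (0 : ℝ) 1) →
      ∀ h₁ h₂ : ℕ,
        (1 ≤ h₁ ∧ (h₁ : ℝ) ≤ H ∧ ∀ j : Fin t,
          nint ((h₁ : ℝ) * α j - γ j) < (4 * (k : ℝ))⁻¹ * X ^ (-(kk (j.1 + 1) : ℝ))) →
        (1 ≤ h₂ ∧ (h₂ : ℝ) ≤ H ∧ ∀ j : Fin t,
          nint ((h₂ : ℝ) * α j - γ j) < (4 * (k : ℝ))⁻¹ * X ^ (-(kk (j.1 + 1) : ℝ))) →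
        h₁ = h₂ := by
  refine ⟨1, fun k kk _ _ htk _ _ X hX H hH hHX α hα γ _ h₁ h₂ hh₁ hh₂ => ?_⟩
  have hHX' : H ≤ X := hHX.trans <| by
    simpa using Real.rpow_le_rpow_of_exponent_le hX (by linarith [hν.1] : 1 - ν ≤ 1)
  by_contra hne
  wlog hlt : h₂ < h₁ generalizing h₁ h₂
  · exact this h₂ h₁ hh₂ hh₁ (Ne.symm hne) (by omega)
  refine hα.2 (mem_majorT_of_nint_mul_le (fun i => hα.1 i trivial) (Nat.sub_pos_of_lt hlt)
    ?_ fun j => ?_)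
  · calc ((h₁ - h₂ : ℕ) : ℝ) ≤ h₁ := by exact_mod_cast Nat.sub_le h₁ h₂
      _ ≤ X := hh₁.2.1.trans hHX'
  · have hdiff : ((h₁ - h₂ : ℕ) : ℝ) * α j = (h₁ * α j - γ j) - (h₂ * α j - γ j) := by
      rw [Nat.cast_sub hlt.le]; ring
    calc nint (((h₁ - h₂ : ℕ) : ℝ) * α j)
        ≤ nint (h₁ * α j - γ j) + nint (h₂ * α j - γ j) := hdiff ▸ nint_sub_le _ _
      _ ≤ 2 * ((4 * (k : ℝ))⁻¹ * X ^ (-(kk (j.1 + 1) : ℝ))) := by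
        linarith [hh₁.2.2 j, hh₂.2.2 j]
      _ ≤ _ := two_mul_inv_four_mul_rpow_le (by exact_mod_cast j.pos) (by exact_mod_cast htk.le)
        (by linarith) hHX' _

theorem statement16 (ν : ℝ) (hν : ν ∈ Set.Ioo (0 : ℝ) 1) (t : ℕ) (ht : 1 ≤ t) :
    ∃ X₀ : ℝ, ∀ (k : ℕ) (kk : ℕ → ℕ), kk 1 = k → 2 ≤ k → t < k → 1 ≤ kk t →
      (∀ a b : ℕ, 1 ≤ a → a < b → b ≤ t → kk b < kk a) →
      ∀ X : ℝ, X₀ ≤ X →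
      ∀ H : ℝ, 1 ≤ H → H ≤ X ^ (1 - ν) →
      ∀ α : Fin t → ℝ,
        α ∈ (Set.univ.pi fun _ : Fin t => Set.Ico (0 : ℝ) 1) \ majorT t kk H X →
      ∀ γ : Fin t → ℝ, (∀ i, γ i ∈ Set.Ico (0 : ℝ) 1) →
      ∀ h₁ h₂ : ℕ,
        (1 ≤ h₁ ∧ (h₁ : ℝ) ≤ H ∧ ∀ j : Fin t,
          nint ((h₁ : ℝ) * α j - γ j) < (4 * (k : ℝ))⁻¹ * X ^ (-(kk (j.1 + 1) : ℝ))) →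
        (1 ≤ h₂ ∧ (h₂ : ℝ) ≤ H ∧ ∀ j : Fin t,
          nint ((h₂ : ℝ) * α j - γ j) < (4 * (k : ℝ))⁻¹ * X ^ (-(kk (j.1 + 1) : ℝ))) →
        h₁ = h₂ :=
  statement16_general ν hν t
end
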